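/- arXiv:2506.09617 — 4 statements merged into one kernel-verified Lean document; each statement's English description precedes it below -/
import Mathlib

section
/- Let N ≥ 1 and α > 0. There exists a constant C > 0 depending only on α such that for all u, v ∈ ℝ^N one has (1/C)·|v^{⟨α⟩} − u^{⟨α⟩}| ≤ (|u| + |v|)^{α−1}·|v − u| ≤ C·|v^{⟨α⟩} − u^{⟨α⟩}| (where for u = v = 0 the middle expression is interpreted as 0). -/
/-!
Assume `‖u‖ ≤ ‖v‖`; then `‖v‖ ≤ ‖u‖ + ‖v‖ ≤ 2‖v‖`, so the weight `(‖u‖ + ‖v‖)^(α-1)` may be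
replaced by `‖v‖^(α-1)` at the cost of a factor `2^|α-1|`. For `α ≥ 1`, the splitting
`v^⟨α⟩ - u^⟨α⟩ = ‖v‖^(α-1) (v - u) + (‖v‖^(α-1) - ‖u‖^(α-1)) u` and the convexity of `t ↦ t^α`
give the upper bound, while the identity
`2⟪t v - s u, v - u⟫ = (t - s)(‖v‖² - ‖u‖²) + (s + t)‖v - u‖²` with `s = ‖u‖^(α-1) ≤ t = ‖v‖^(α-1)`
gives `⟪v^⟨α⟩ - u^⟨α⟩, v - u⟫ ≥ ‖v‖^(α-1)‖v - u‖² / 2`, hence the lower bound by Cauchy–Schwarz.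
For `α < 1`, apply the case `α⁻¹ ≥ 1` to `u^⟨α⟩` and `v^⟨α⟩`, since `(u^⟨α⟩)^⟨α⁻¹⟩ = u`.
-/

/-- For `α > 0` and a vector `u`, the power `u^{⟨α⟩} := ‖u‖^(α-1) • u` (with `0^{⟨α⟩} = 0`). -/
noncomputable def vpow {E : Type*} [NormedAddCommGroup E] [NormedSpace ℝ E] (α : ℝ) (u : E) : E :=
  (‖u‖ ^ (α - 1)) • u

open Real

lemma rpow_sub_one_mul_self {p x : ℝ} (hp : p ≠ 0) (hx : 0 ≤ x) : x ^ (p - 1) * x = x ^ p := by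
  rw [← rpow_add_one' hx (by simpa), sub_add_cancel]

lemma rpow_sub_rpow_le_mul_rpow_sub_one_mul {p a b : ℝ} (hp : 1 ≤ p) (ha : 0 ≤ a) (hb : 0 < b) :
    b ^ p - a ^ p ≤ p * b ^ (p - 1) * (b - a) := by
  have bernoulli := one_add_mul_self_le_rpow_one_add (s := a / b - 1)
    (by linarith [div_nonneg ha hb.le]) hp
  rw [add_sub_cancel, div_rpow ha hb.le, le_div_iff₀ (by positivity),
    ← rpow_sub_one_mul_self (by linarith) hb.le] at bernoulli
  field_simp at bernoulli
  rw [← rpow_sub_one_mul_self (by linarith) hb.le]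
  linarith

lemma rpow_comparable_of_le_of_le_two_mul (γ : ℝ) {x y : ℝ} (hx : 0 < x) (hxy : x ≤ y)
    (hyx : y ≤ 2 * x) : y ^ γ ≤ 2 ^ |γ| * x ^ γ ∧ x ^ γ ≤ 2 ^ |γ| * y ^ γ := by
  set t := y / x with ht
  have ht1 : 1 ≤ t := (one_le_div hx).2 hxy
  have hbound : ∀ δ : ℝ, t ^ δ ≤ 2 ^ |δ| := fun δ =>
    (rpow_le_rpow_of_exponent_le ht1 (le_abs_self δ)).trans
      (rpow_le_rpow (by positivity) ((div_le_iff₀ hx).2 (by linarith)) (abs_nonneg δ))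
  have hy : y ^ γ = x ^ γ * t ^ γ := by
    rw [← mul_rpow hx.le (by positivity), ht, mul_div_cancel₀ _ hx.ne']
  constructor
  · rw [hy, mul_comm]; gcongr; exact hbound γ
  · calc x ^ γ = x ^ γ * t ^ γ * t ^ (-γ) := by
          rw [mul_assoc, ← rpow_add (by positivity), add_neg_cancel, rpow_zero, mul_one]
      _ ≤ x ^ γ * t ^ γ * 2 ^ |γ| := by gcongr; simpa using hbound (-γ)
      _ = 2 ^ |γ| * y ^ γ := by rw [hy]; ring

lemma eq_zero_and_eq_zero_or_norm_pos_of_norm_le {E : Type*} [NormedAddGroup E] {u v : E}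
    (huv : ‖u‖ ≤ ‖v‖) :
    (u = 0 ∧ v = 0) ∨ 0 < ‖v‖ := by
  rcases (norm_nonneg v).eq_or_lt with hv | hv
  · exact .inl ⟨norm_le_zero_iff.1 (hv ▸ huv), norm_eq_zero.1 hv.symm⟩
  · exact .inr hv

section Normed

variable {E : Type*} [NormedAddCommGroup E] [NormedSpace ℝ E]

@[simp]
lemma vpow_zero_right (α : ℝ) : vpow α (0 : E) = 0 := by
  simp [vpow]

lemma vpow_one (u : E) : vpow 1 u = u := by
  simp [vpow]

lemma norm_vpow_of_ne_zero (α : ℝ) {u : E} (hu : u ≠ 0) : ‖vpow α u‖ = ‖u‖ ^ α := by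
  rw [vpow, norm_smul, norm_of_nonneg (by positivity), rpow_sub_one (norm_ne_zero_iff.2 hu),
    div_mul_cancel₀ _ (norm_ne_zero_iff.2 hu)]

lemma norm_vpow {α : ℝ} (hα : α ≠ 0) (u : E) : ‖vpow α u‖ = ‖u‖ ^ α := by
  rcases eq_or_ne u 0 with rfl | hu
  · simp [zero_rpow hα]
  · exact norm_vpow_of_ne_zero α hu

lemma vpow_vpow (α β : ℝ) (u : E) : vpow β (vpow α u) = vpow (α * β) u := by
  rcases eq_or_ne u 0 with rfl | hu
  · simp
  have hu' : 0 < ‖u‖ := norm_pos_iff.2 hu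
  rw [vpow, norm_vpow_of_ne_zero α hu, vpow, vpow, smul_smul, ← rpow_mul hu'.le, ← rpow_add hu']
  ring_nf

lemma norm_vpow_sub_vpow_le_of_norm_le {α : ℝ} (hα : 1 ≤ α) {u v : E} (huv : ‖u‖ ≤ ‖v‖) :
    ‖vpow α v - vpow α u‖ ≤ α * (‖v‖ ^ (α - 1) * ‖v - u‖) := by
  obtain ⟨rfl, rfl⟩ | hv := eq_zero_and_eq_zero_or_norm_pos_of_norm_le huv
  · simp
  have hsplit : vpow α v - vpow α u
      = ‖v‖ ^ (α - 1) • (v - u) + (‖v‖ ^ (α - 1) - ‖u‖ ^ (α - 1)) • u := by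
    simp only [vpow, smul_sub, sub_smul]
    abel
  have hmono : ‖u‖ ^ (α - 1) ≤ ‖v‖ ^ (α - 1) := rpow_le_rpow (norm_nonneg _) huv (by linarith)
  have hcorr : (‖v‖ ^ (α - 1) - ‖u‖ ^ (α - 1)) * ‖u‖ ≤ (α - 1) * (‖v‖ ^ (α - 1) * ‖v - u‖) := by
    have htangent := rpow_sub_rpow_le_mul_rpow_sub_one_mul hα (norm_nonneg u) hv
    rw [← rpow_sub_one_mul_self (by linarith) hv.le,
      ← rpow_sub_one_mul_self (by linarith) (norm_nonneg u)] at htangent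
    nlinarith [mul_nonneg (mul_nonneg (sub_nonneg.2 hα) (rpow_nonneg (norm_nonneg v) (α - 1)))
      (sub_nonneg.2 (norm_sub_norm_le v u))]
  calc ‖vpow α v - vpow α u‖
      ≤ ‖v‖ ^ (α - 1) * ‖v - u‖ + (‖v‖ ^ (α - 1) - ‖u‖ ^ (α - 1)) * ‖u‖ := by
        rw [hsplit]
        refine (norm_add_le _ _).trans_eq ?_
        rw [norm_smul, norm_smul, norm_of_nonneg (by positivity), norm_of_nonneg (by linarith)]
    _ ≤ α * (‖v‖ ^ (α - 1) * ‖v - u‖) := by linarith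

end Normed

noncomputable def vpowConst (α : ℝ) : ℝ := 2 ^ |α - 1| * max (max α α⁻¹) 2

lemma vpowConst_pos (α : ℝ) : 0 < vpowConst α := by
  unfold vpowConst
  positivity

section InnerProduct

variable {E : Type*} [NormedAddCommGroup E] [InnerProductSpace ℝ E]

lemma two_mul_inner_smul_sub_smul_sub (s t : ℝ) (u v : E) :
    2 * inner ℝ (t • v - s • u) (v - u)
      = (t - s) * (‖v‖ ^ 2 - ‖u‖ ^ 2) + (s + t) * ‖v - u‖ ^ 2 := by
  rw [norm_sub_sq_real]
  simp only [inner_sub_left, inner_sub_right, real_inner_smul_left, real_inner_self_eq_norm_sq,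
    real_inner_comm u v]
  ring

lemma rpow_mul_norm_sub_le_two_mul_norm_vpow_sub_vpow {α : ℝ} (hα : 1 ≤ α) {u v : E}
    (huv : ‖u‖ ≤ ‖v‖) :
    ‖v‖ ^ (α - 1) * ‖v - u‖ ≤ 2 * ‖vpow α v - vpow α u‖ := by
  rcases (norm_nonneg (v - u)).eq_or_lt with hw | hw
  · rw [← hw, mul_zero]
    positivity
  have hmono : ‖u‖ ^ (α - 1) ≤ ‖v‖ ^ (α - 1) := rpow_le_rpow (norm_nonneg _) huv (by linarith)
  have hsq : ‖u‖ ^ 2 ≤ ‖v‖ ^ 2 := by gcongr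
  have hid := two_mul_inner_smul_sub_smul_sub (‖u‖ ^ (α - 1)) (‖v‖ ^ (α - 1)) u v
  refine le_of_mul_le_mul_right ?_ hw
  calc ‖v‖ ^ (α - 1) * ‖v - u‖ * ‖v - u‖
      ≤ 2 * inner ℝ (vpow α v - vpow α u) (v - u) := by
        rw [vpow, vpow, hid]
        nlinarith [rpow_nonneg (norm_nonneg u) (α - 1),
          mul_nonneg (sub_nonneg.2 hmono) (sub_nonneg.2 hsq)]
    _ ≤ 2 * ‖vpow α v - vpow α u‖ * ‖v - u‖ := by
        linarith [real_inner_le_norm (vpow α v - vpow α u) (v - u)]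

lemma norm_vpow_sub_vpow_comparable_of_le_one {α : ℝ} (hα₀ : 0 < α) (hα₁ : α ≤ 1) {u v : E}
    (huv : ‖u‖ ≤ ‖v‖) :
    ‖vpow α v - vpow α u‖ ≤ 2 * (‖v‖ ^ (α - 1) * ‖v - u‖) ∧
      ‖v‖ ^ (α - 1) * ‖v - u‖ ≤ α⁻¹ * ‖vpow α v - vpow α u‖ := by
  obtain ⟨rfl, rfl⟩ | hv := eq_zero_and_eq_zero_or_norm_pos_of_norm_le huv
  · simp
  have hβ : 1 ≤ α⁻¹ := (one_le_inv₀ hα₀).2 hα₁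
  have hUV : ‖vpow α u‖ ≤ ‖vpow α v‖ := by
    rw [norm_vpow hα₀.ne', norm_vpow hα₀.ne']
    exact rpow_le_rpow (norm_nonneg _) huv hα₀.le
  have hinv (w : E) : vpow α⁻¹ (vpow α w) = w := by
    rw [vpow_vpow, mul_inv_cancel₀ hα₀.ne', vpow_one]
  have hweight : ‖vpow α v‖ ^ (α⁻¹ - 1) = ‖v‖ ^ (1 - α) := by
    rw [norm_vpow hα₀.ne', ← rpow_mul (norm_nonneg _)]
    congr 1
    field_simp
  have hup := norm_vpow_sub_vpow_le_of_norm_le hβ hUV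
  have hlow := rpow_mul_norm_sub_le_two_mul_norm_vpow_sub_vpow hβ hUV
  rw [hinv, hinv, hweight] at hup hlow
  have hcancel : ‖v‖ ^ (α - 1) * ‖v‖ ^ (1 - α) = 1 := by
    rw [← rpow_add hv, sub_add_sub_cancel', sub_self, rpow_zero]
  constructor
  · calc ‖vpow α v - vpow α u‖
        = ‖v‖ ^ (α - 1) * (‖v‖ ^ (1 - α) * ‖vpow α v - vpow α u‖) := by
          rw [← mul_assoc, hcancel, one_mul]
      _ ≤ ‖v‖ ^ (α - 1) * (2 * ‖v - u‖) := by gcongr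
      _ = 2 * (‖v‖ ^ (α - 1) * ‖v - u‖) := by ring
  · calc ‖v‖ ^ (α - 1) * ‖v - u‖
        ≤ ‖v‖ ^ (α - 1) * (α⁻¹ * (‖v‖ ^ (1 - α) * ‖vpow α v - vpow α u‖)) := by gcongr
      _ = α⁻¹ * ‖vpow α v - vpow α u‖ := by
          rw [mul_left_comm, ← mul_assoc (‖v‖ ^ (α - 1)), hcancel, one_mul]

lemma norm_vpow_sub_vpow_comparable {α : ℝ} (hα : 0 < α) {u v : E} (huv : ‖u‖ ≤ ‖v‖) :
    ‖vpow α v - vpow α u‖ ≤ max α 2 * (‖v‖ ^ (α - 1) * ‖v - u‖) ∧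
      ‖v‖ ^ (α - 1) * ‖v - u‖ ≤ max α⁻¹ 2 * ‖vpow α v - vpow α u‖ := by
  rcases le_total 1 α with hα₁ | hα₁
  · exact ⟨(norm_vpow_sub_vpow_le_of_norm_le hα₁ huv).trans (by gcongr; exact le_max_left _ _),
      (rpow_mul_norm_sub_le_two_mul_norm_vpow_sub_vpow hα₁ huv).trans
        (by gcongr; exact le_max_right _ _)⟩
  · obtain ⟨hup, hlow⟩ := norm_vpow_sub_vpow_comparable_of_le_one hα hα₁ huv
    exact ⟨hup.trans (by gcongr; exact le_max_right _ _),
      hlow.trans (by gcongr; exact le_max_left _ _)⟩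

lemma norm_vpow_sub_vpow_equiv_of_norm_le {α : ℝ} (hα : 0 < α) {u v : E} (huv : ‖u‖ ≤ ‖v‖) :
    (1 / vpowConst α) * ‖vpow α v - vpow α u‖ ≤ (‖u‖ + ‖v‖) ^ (α - 1) * ‖v - u‖ ∧
      (‖u‖ + ‖v‖) ^ (α - 1) * ‖v - u‖ ≤ vpowConst α * ‖vpow α v - vpow α u‖ := by
  obtain ⟨rfl, rfl⟩ | hv := eq_zero_and_eq_zero_or_norm_pos_of_norm_le huv
  · simp
  obtain ⟨hup, hlow⟩ := norm_vpow_sub_vpow_comparable hα huv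
  obtain ⟨hsum_le, hv_le⟩ := rpow_comparable_of_le_of_le_two_mul (α - 1) hv
    (le_add_of_nonneg_left (norm_nonneg u)) (by linarith)
  have hK₁ : max α 2 ≤ max (max α α⁻¹) 2 := max_le_max_right 2 (le_max_left α α⁻¹)
  have hK₂ : max α⁻¹ 2 ≤ max (max α α⁻¹) 2 := max_le_max_right 2 (le_max_right α α⁻¹)
  constructor
  · rw [one_div, inv_mul_le_iff₀ (vpowConst_pos α), vpowConst]
    calc ‖vpow α v - vpow α u‖
        ≤ max α 2 * (‖v‖ ^ (α - 1) * ‖v - u‖) := hup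
      _ ≤ max (max α α⁻¹) 2 * (2 ^ |α - 1| * (‖u‖ + ‖v‖) ^ (α - 1) * ‖v - u‖) := by gcongr
      _ = _ := by ring
  · calc (‖u‖ + ‖v‖) ^ (α - 1) * ‖v - u‖
        ≤ 2 ^ |α - 1| * (‖v‖ ^ (α - 1) * ‖v - u‖) := by
          rw [← mul_assoc]; gcongr
      _ ≤ 2 ^ |α - 1| * (max (max α α⁻¹) 2 * ‖vpow α v - vpow α u‖) :=
          mul_le_mul_of_nonneg_left (hlow.trans (by gcongr)) (by positivity)
      _ = vpowConst α * ‖vpow α v - vpow α u‖ := by rw [vpowConst]; ring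

theorem norm_vpow_sub_vpow_equiv {α : ℝ} (hα : 0 < α) (u v : E) :
    (1 / vpowConst α) * ‖vpow α v - vpow α u‖ ≤ (‖u‖ + ‖v‖) ^ (α - 1) * ‖v - u‖ ∧
      (‖u‖ + ‖v‖) ^ (α - 1) * ‖v - u‖ ≤ vpowConst α * ‖vpow α v - vpow α u‖ := by
  rcases le_total ‖u‖ ‖v‖ with huv | hvu
  · exact norm_vpow_sub_vpow_equiv_of_norm_le hα huv
  · simpa only [norm_sub_rev v u, norm_sub_rev (vpow α v), add_comm ‖v‖]
      using norm_vpow_sub_vpow_equiv_of_norm_le hα hvu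

end InnerProduct

/-- There exists a constant `C > 0`, depending only on `α > 0`, such that for all `N ≥ 1` and
all `u, v ∈ ℝ^N`:
`(1/C)·|v^{⟨α⟩} − u^{⟨α⟩}| ≤ (|u| + |v|)^{α−1}·|v − u| ≤ C·|v^{⟨α⟩} − u^{⟨α⟩}|`. -/
theorem stmt0 (α : ℝ) (hα : 0 < α) :
    ∃ C : ℝ, 0 < C ∧ ∀ (N : ℕ), 1 ≤ N → ∀ u v : EuclideanSpace ℝ (Fin N),
      (1 / C) * ‖vpow α v - vpow α u‖ ≤ (‖u‖ + ‖v‖) ^ (α - 1) * ‖v - u‖ ∧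
      (‖u‖ + ‖v‖) ^ (α - 1) * ‖v - u‖ ≤ C * ‖vpow α v - vpow α u‖ :=
  ⟨vpowConst α, vpowConst_pos α, fun _ _ u v => norm_vpow_sub_vpow_equiv hα u v⟩
end

section
/- Let N ≥ 1 and α > 1. There exists a constant C > 0 depending only on α such that for all u, v ∈ ℝ^N one has |v − u|^α ≤ C·|v^{⟨α⟩} − u^{⟨α⟩}|. -/
open RealInnerProductSpace

lemma rpow_sub_rpow_mul_sq_sub_sq_nonneg {a b p : ℝ} (ha : 0 ≤ a) (hb : 0 ≤ b) (hp : 0 ≤ p) :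
    0 ≤ (b ^ p - a ^ p) * (b ^ 2 - a ^ 2) := by
  rcases le_total a b with h | h
  · exact mul_nonneg (sub_nonneg.2 (Real.rpow_le_rpow ha h hp))
      (sub_nonneg.2 (pow_le_pow_left₀ ha h 2))
  · exact mul_nonneg_of_nonpos_of_nonpos (sub_nonpos.2 (Real.rpow_le_rpow hb h hp))
      (sub_nonpos.2 (pow_le_pow_left₀ hb h 2))

lemma add_rpow_le_two_rpow_mul_add_rpow {x y p : ℝ} (hx : 0 ≤ x) (hy : 0 ≤ y) (hp : 0 ≤ p) :
    (x + y) ^ p ≤ 2 ^ p * (x ^ p + y ^ p) := by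
  have hmax : (max x y) ^ p ≤ x ^ p + y ^ p := by
    rcases le_total x y with h | h
    · rw [max_eq_right h]; linarith [Real.rpow_nonneg hx p]
    · rw [max_eq_left h]; linarith [Real.rpow_nonneg hy p]
  calc (x + y) ^ p ≤ (2 * max x y) ^ p :=
        Real.rpow_le_rpow (by positivity) (by linarith [le_max_left x y, le_max_right x y]) hp
    _ = 2 ^ p * (max x y) ^ p := Real.mul_rpow zero_le_two (le_max_of_le_left hx)
    _ ≤ 2 ^ p * (x ^ p + y ^ p) := by gcongr

section InnerProductSpace

variable {E : Type*} [NormedAddCommGroup E] [InnerProductSpace ℝ E]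

lemma inner_vpow_sub_vpow_sub_eq (α : ℝ) (u v : E) :
    ⟪vpow α v - vpow α u, v - u⟫ =
      (‖u‖ ^ (α - 1) + ‖v‖ ^ (α - 1)) / 2 * ‖v - u‖ ^ 2
        + (‖v‖ ^ (α - 1) - ‖u‖ ^ (α - 1)) * (‖v‖ ^ 2 - ‖u‖ ^ 2) / 2 := by
  rw [← real_inner_self_eq_norm_sq (v - u)]
  simp only [vpow, inner_sub_left, inner_sub_right, real_inner_smul_left,
    real_inner_self_eq_norm_sq, real_inner_comm v u]
  ring

lemma norm_sub_rpow_add_one_le_inner_vpow_sub {α : ℝ} (hα : 1 ≤ α) (u v : E) :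
    ‖v - u‖ ^ (α + 1) ≤ 2 ^ α * ⟪vpow α v - vpow α u, v - u⟫ := by
  have hα₁ : 0 ≤ α - 1 := by linarith
  set d := ‖v - u‖
  have hd : d ^ (α - 1) ≤ 2 ^ (α - 1) * (‖u‖ ^ (α - 1) + ‖v‖ ^ (α - 1)) := calc
    d ^ (α - 1) ≤ (‖u‖ + ‖v‖) ^ (α - 1) :=
      Real.rpow_le_rpow (norm_nonneg _) ((norm_sub_le v u).trans_eq (add_comm _ _)) hα₁
    _ ≤ _ := add_rpow_le_two_rpow_mul_add_rpow (norm_nonneg _) (norm_nonneg _) hα₁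
  have hcross := rpow_sub_rpow_mul_sq_sub_sq_nonneg (norm_nonneg u) (norm_nonneg v) hα₁
  have htwo : (2 : ℝ) ^ α = 2 ^ (α - 1) * 2 := by
    rw [Real.rpow_sub_one two_ne_zero]; ring
  calc d ^ (α + 1) = d ^ (α - 1) * d ^ 2 := by
        rw [show α + 1 = (α - 1) + 2 by ring, Real.rpow_add' (norm_nonneg _) (by linarith),
          Real.rpow_two]
    _ ≤ 2 ^ (α - 1) * (‖u‖ ^ (α - 1) + ‖v‖ ^ (α - 1)) * d ^ 2 := by gcongr
    _ ≤ 2 ^ α * ⟪vpow α v - vpow α u, v - u⟫ := by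
        rw [inner_vpow_sub_vpow_sub_eq, htwo]
        nlinarith [Real.rpow_pos_of_pos (two_pos (α := ℝ)) (α - 1)]

lemma norm_sub_rpow_le_two_rpow_mul_norm_vpow_sub {α : ℝ} (hα : 1 ≤ α) (u v : E) :
    ‖v - u‖ ^ α ≤ 2 ^ α * ‖vpow α v - vpow α u‖ := by
  rcases (norm_nonneg (v - u)).eq_or_lt with h0 | hpos
  · rw [← h0, Real.zero_rpow (by linarith)]
    positivity
  refine le_of_mul_le_mul_right ?_ hpos
  calc ‖v - u‖ ^ α * ‖v - u‖ = ‖v - u‖ ^ (α + 1) := by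
        rw [Real.rpow_add hpos, Real.rpow_one]
    _ ≤ 2 ^ α * ⟪vpow α v - vpow α u, v - u⟫ := norm_sub_rpow_add_one_le_inner_vpow_sub hα u v
    _ ≤ 2 ^ α * (‖vpow α v - vpow α u‖ * ‖v - u‖) := by
        gcongr; exact real_inner_le_norm _ _
    _ = _ := by ring

end InnerProductSpace

/-- There exists a constant `C > 0`, depending only on `α > 1`, such that for all `N ≥ 1` and
all `u, v ∈ ℝ^N`: `|v − u|^α ≤ C·|v^{⟨α⟩} − u^{⟨α⟩}|`. -/
theorem stmt1 (α : ℝ) (hα : 1 < α) :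
    ∃ C : ℝ, 0 < C ∧ ∀ (N : ℕ), 1 ≤ N → ∀ u v : EuclideanSpace ℝ (Fin N),
      ‖v - u‖ ^ α ≤ C * ‖vpow α v - vpow α u‖ :=
  ⟨2 ^ α, by positivity, fun _ _ u v => norm_sub_rpow_le_two_rpow_mul_norm_vpow_sub hα.le u v⟩
end

section
/- Let X be a real Banach space, 0 < T < ∞, 1 ≤ r < ∞, v_o ∈ X, and v ∈ L^r(0,T;X). Then for every h > 0 the Landes mollification [v]_h belongs to L^r(0,T;X), and for every t_o ∈ (0,T] one has the bound ‖[v]_h‖_{L^r(0,t_o;X)} ≤ ‖v‖_{L^r(0,t_o;X)} + [ (h/r)·(1 − e^{−t_o r/h}) ]^{1/r}·‖v_o‖_X. -/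
/-!
With `k x = e^{-x/h}/h` for `x ≥ 0` (and `0` otherwise), a kernel of total mass `1`,
`[v]_h(t) = e^{-t/h} v_o + ∫_0^t k (t - s) v(s) ds`. The first term has `L^r(0,t_o)` norm exactly
`((h/r)(1 - e^{-t_o r/h}))^{1/r} ‖v_o‖`. The second is bounded in `L^r(0,t_o)` by
`‖v‖_{L^r(0,t_o)}` by Young's convolution inequality, obtained as Schur's test: Jensen's
inequality for the sub-probability measures `k (t - s) ds`, then Tonelli, then the mass bound
in `t`. Minkowski's inequality adds the two. Measurability of `[v]_h` comes from its continuity: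
it is `e^{-t/h}` times an affine function of a primitive of the integrable `e^{s/h} v(s)`.
-/

open MeasureTheory Set
open scoped ENNReal

/-- The Landes mollification `[v]_h(t) := e^{−t/h} v_o + (1/h) ∫_0^t e^{(s−t)/h} v(s) ds`. -/
noncomputable def landes {X : Type*} [NormedAddCommGroup X] [NormedSpace ℝ X]
    (h : ℝ) (v_o : X) (v : ℝ → X) (t : ℝ) : X :=
  Real.exp (-t / h) • v_o + (1 / h) • ∫ s in (0:ℝ)..t, Real.exp ((s - t) / h) • v s

theorem rpow_lintegral_le_lintegral_rpow_of_measure_univ_le_one {α : Type*} [MeasurableSpace α]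
    {μ : Measure α} (hμ : μ univ ≤ 1) {f : α → ℝ≥0∞} (hf : AEMeasurable f μ) {r : ℝ}
    (hr : 1 ≤ r) : (∫⁻ x, f x ∂μ) ^ r ≤ ∫⁻ x, f x ^ r ∂μ := by
  have hr0 : 0 < r := one_pos.trans_le hr
  have hL1 : ∫⁻ x, f x ∂μ ≤ (∫⁻ x, f x ^ r ∂μ) ^ (1 / r) := by
    have := eLpNorm'_le_eLpNorm'_mul_rpow_measure_univ one_pos hr hf.aestronglyMeasurable
    simp only [eLpNorm'_eq_lintegral_enorm, enorm_eq_self, ENNReal.rpow_one, div_one] at this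
    refine this.trans (mul_le_of_le_one_right' (ENNReal.rpow_le_one hμ ?_))
    rw [sub_nonneg]
    exact div_le_one_of_le₀ hr hr0.le
  calc (∫⁻ x, f x ∂μ) ^ r ≤ ((∫⁻ x, f x ^ r ∂μ) ^ (1 / r)) ^ r := by gcongr
    _ = ∫⁻ x, f x ^ r ∂μ := by rw [← ENNReal.rpow_mul, one_div_mul_cancel hr0.ne', ENNReal.rpow_one]

theorem lintegral_rpow_lintegral_mul_le {α β : Type*} [MeasurableSpace α] [MeasurableSpace β]
    {μ : Measure α} {ν : Measure β} [SFinite μ] [SFinite ν] {K : α → β → ℝ≥0∞}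
    (hK : Measurable (Function.uncurry K)) (hrow : ∀ a, ∫⁻ b, K a b ∂ν ≤ 1)
    (hcol : ∀ b, ∫⁻ a, K a b ∂μ ≤ 1) {f : β → ℝ≥0∞} (hf : AEMeasurable f ν) {r : ℝ}
    (hr : 1 ≤ r) : ∫⁻ a, (∫⁻ b, K a b * f b ∂ν) ^ r ∂μ ≤ ∫⁻ b, f b ^ r ∂ν := by
  have hKa (a : α) : Measurable (K a) := hK.comp measurable_prodMk_left
  have hKb (b : β) : Measurable (K · b) := hK.comp measurable_prodMk_right
  calc ∫⁻ a, (∫⁻ b, K a b * f b ∂ν) ^ r ∂μ ≤ ∫⁻ a, ∫⁻ b, K a b * f b ^ r ∂ν ∂μ := by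
        refine lintegral_mono fun a => ?_
        have hmass : ν.withDensity (K a) univ ≤ 1 := by
          rw [withDensity_apply _ MeasurableSet.univ, Measure.restrict_univ]
          exact hrow a
        have hfa := hf.mono_ac (withDensity_absolutelyContinuous ν (K a))
        have := rpow_lintegral_le_lintegral_rpow_of_measure_univ_le_one hmass hfa hr
        rwa [lintegral_withDensity_eq_lintegral_mul₀ (hKa a).aemeasurable hf,
          lintegral_withDensity_eq_lintegral_mul₀ (hKa a).aemeasurable (hf.pow_const r)] at this
    _ = ∫⁻ b, ∫⁻ a, K a b * f b ^ r ∂μ ∂ν :=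
        lintegral_lintegral_swap (hK.aemeasurable.mul (hf.pow_const r).comp_snd)
    _ = ∫⁻ b, (∫⁻ a, K a b ∂μ) * f b ^ r ∂ν := by
        simp_rw [lintegral_mul_const _ (hKb _)]
    _ ≤ ∫⁻ b, f b ^ r ∂ν := lintegral_mono fun b => mul_le_of_le_one_left' (hcol b)

theorem lintegral_rpow_setLIntegral_sub_mul_le {G : Type*} [AddGroup G] [MeasurableSpace G]
    [MeasurableAdd₂ G] [MeasurableNeg G] {μ : Measure G} [SFinite μ] [μ.IsAddLeftInvariant]
    [μ.IsAddRightInvariant] [μ.IsNegInvariant] {k : G → ℝ≥0∞} (hk : Measurable k)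
    (hk1 : ∫⁻ x, k x ∂μ ≤ 1) (s : Set G) {f : G → ℝ≥0∞} (hf : AEMeasurable f (μ.restrict s))
    {r : ℝ} (hr : 1 ≤ r) :
    ∫⁻ t in s, (∫⁻ u in s, k (t - u) * f u ∂μ) ^ r ∂μ ≤ ∫⁻ u in s, f u ^ r ∂μ :=
  lintegral_rpow_lintegral_mul_le (K := fun t u => k (t - u)) (hk.comp measurable_sub)
    (fun t => (setLIntegral_le_lintegral _ _).trans
      ((lintegral_sub_left_eq_self k t).trans_le hk1))
    (fun u => (setLIntegral_le_lintegral _ _).trans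
      ((lintegral_sub_right_eq_self k u).trans_le hk1)) hf hr

noncomputable def expKernel (h : ℝ) : ℝ → ℝ≥0∞ :=
  (Ici 0).indicator fun x => ENNReal.ofReal (Real.exp (-x / h) / h)

theorem measurable_expKernel (h : ℝ) : Measurable (expKernel h) :=
  Measurable.indicator (by fun_prop) measurableSet_Ici

theorem lintegral_expKernel {h : ℝ} (hh : 0 < h) : ∫⁻ x, expKernel h x = 1 := by
  have hexp (x : ℝ) : Real.exp (-x / h) = Real.exp (-h⁻¹ * x) := by
    rw [neg_mul, inv_mul_eq_div, neg_div]
  have hint : IntegrableOn (fun x : ℝ => Real.exp (-x / h) / h) (Ioi 0) := by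
    simp_rw [hexp]
    exact (integrableOn_exp_mul_Ioi (neg_lt_zero.2 (inv_pos.2 hh)) 0).div_const h
  rw [expKernel, lintegral_indicator measurableSet_Ici, setLIntegral_congr Ioi_ae_eq_Ici.symm,
    ← ofReal_integral_eq_lintegral_ofReal hint (ae_of_all _ fun x => by positivity),
    integral_div]
  simp_rw [hexp]
  rw [integral_exp_mul_Ioi (neg_lt_zero.2 (inv_pos.2 hh)), mul_zero, Real.exp_zero]
  field_simp
  simp

theorem integral_Ioo_exp_neg_mul_div {h r b : ℝ} (hh : h ≠ 0) (hr : r ≠ 0) (hb : 0 ≤ b) :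
    ∫ t in Ioo 0 b, Real.exp (-(t * r) / h) = h / r * (1 - Real.exp (-(b * r) / h)) := by
  have hc : -r / h ≠ 0 := div_ne_zero (neg_ne_zero.2 hr) hh
  have hexp (t : ℝ) : Real.exp (-(t * r) / h) = Real.exp (-r / h * t) := by ring_nf
  rw [← integral_Ioc_eq_integral_Ioo, ← intervalIntegral.integral_of_le hb]
  simp_rw [hexp]
  rw [intervalIntegral.integral_comp_mul_left (fun x => Real.exp x) hc, integral_exp,
    mul_zero, Real.exp_zero, smul_eq_mul]
  field_simp
  ring

theorem div_mul_one_sub_exp_nonneg {h r b : ℝ} (hh : 0 < h) (hr : 0 < r) (hb : 0 ≤ b) :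
    0 ≤ h / r * (1 - Real.exp (-(b * r) / h)) :=
  mul_nonneg (by positivity) (sub_nonneg.2 (Real.exp_le_one_iff.2
    (div_nonpos_of_nonpos_of_nonneg (neg_nonpos.2 (by positivity)) hh.le)))

theorem MeasureTheory.MemLp.rpow_integral_norm_rpow_eq_toReal_eLpNorm {α E : Type*}
    [MeasurableSpace α] {μ : Measure α} [NormedAddCommGroup E] {f : α → E} {r : ℝ} (hr : 0 < r)
    (hf : MemLp f (ENNReal.ofReal r) μ) :
    (∫ a, ‖f a‖ ^ r ∂μ) ^ (1 / r) = (eLpNorm f (ENNReal.ofReal r) μ).toReal := by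
  rw [hf.eLpNorm_eq_integral_rpow_norm (ENNReal.ofReal_ne_zero_iff.2 hr) ENNReal.ofReal_ne_top,
    ENNReal.toReal_ofReal hr.le, ENNReal.toReal_ofReal (by positivity), one_div]

section Landes

variable {X : Type*} [NormedAddCommGroup X] [NormedSpace ℝ X] {h : ℝ} {v_o : X} {v : ℝ → X}

theorem landes_eq_exp_smul (h : ℝ) (v_o : X) (v : ℝ → X) (t : ℝ) :
    landes h v_o v t =
      Real.exp (-t / h) • (v_o + (1 / h) • ∫ s in (0:ℝ)..t, Real.exp (s / h) • v s) := by
  have hexp (s : ℝ) : Real.exp ((s - t) / h) = Real.exp (-t / h) * Real.exp (s / h) := by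
    rw [← Real.exp_add]; ring_nf
  simp_rw [landes, hexp, mul_smul, intervalIntegral.integral_smul, smul_add, smul_comm _ (1 / h)]

theorem continuousOn_landes {b : ℝ} (hv : IntegrableOn v (uIcc 0 b)) :
    ContinuousOn (landes h v_o v) (uIcc 0 b) := by
  have hint : IntegrableOn (fun s => Real.exp (s / h) • v s) (uIcc 0 b) :=
    hv.continuousOn_smul (by fun_prop) isCompact_uIcc
  rw [funext (landes_eq_exp_smul h v_o v)]
  exact (Continuous.continuousOn (by fun_prop)).smul (continuousOn_const.add
    (continuousOn_const.smul (intervalIntegral.continuousOn_primitive_interval hint)))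

theorem enorm_landes_le (hh : 0 < h) {t : ℝ} (ht : 0 ≤ t) :
    ‖landes h v_o v t‖ₑ ≤
      ‖Real.exp (-t / h) • v_o‖ₑ + ∫⁻ s in Ioc 0 t, expKernel h (t - s) * ‖v s‖ₑ := by
  refine (enorm_add_le _ _).trans (add_le_add le_rfl ?_)
  have hker : ∀ s ∈ Ioc 0 t, ‖(1 / h) • (Real.exp ((s - t) / h) • v s)‖ₑ =
      expKernel h (t - s) * ‖v s‖ₑ := fun s hs => by
    rw [expKernel, indicator_of_mem (mem_Ici.2 (sub_nonneg.2 hs.2)), smul_smul,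
      enorm_smul, Real.enorm_of_nonneg (by positivity)]
    congr 2
    ring_nf
  rw [← setLIntegral_congr_fun measurableSet_Ioc hker, intervalIntegral.integral_of_le ht,
    ← integral_smul]
  exact enorm_integral_le_lintegral_enorm _

theorem eLpNorm'_exp_smul (hh : 0 < h) {r b : ℝ} (hr : 0 < r) (hb : 0 ≤ b) (x : X) :
    eLpNorm' (fun t => Real.exp (-t / h) • x) r (volume.restrict (Ioo 0 b)) =
      ENNReal.ofReal ((h / r * (1 - Real.exp (-(b * r) / h))) ^ (1 / r)) * ‖x‖ₑ := by
  have hpow (t : ℝ) : ‖Real.exp (-t / h) • x‖ₑ ^ r =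
      ENNReal.ofReal (Real.exp (-(t * r) / h)) * ‖x‖ₑ ^ r := by
    rw [enorm_smul, Real.enorm_of_nonneg (Real.exp_pos _).le,
      ENNReal.mul_rpow_of_nonneg _ _ hr.le, ENNReal.ofReal_rpow_of_nonneg (Real.exp_pos _).le hr.le,
      ← Real.exp_mul]
    ring_nf
  simp_rw [eLpNorm'_eq_lintegral_enorm, hpow]
  rw [lintegral_mul_const' _ _ (by simp [hr.le]),
    ← ofReal_integral_eq_lintegral_ofReal, integral_Ioo_exp_neg_mul_div hh.ne' hr.ne' hb,
    ENNReal.mul_rpow_of_nonneg _ _ (by positivity), ← ENNReal.rpow_mul, mul_one_div_cancel hr.ne',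
    ENNReal.rpow_one,
    ENNReal.ofReal_rpow_of_nonneg (div_mul_one_sub_exp_nonneg hh hr hb) (by positivity)]
  · exact (Continuous.integrableOn_Icc (by fun_prop)).mono_set Ioo_subset_Icc_self
  · exact ae_of_all _ fun t => (Real.exp_pos _).le

theorem eLpNorm_landes_le (hh : 0 < h) {r b : ℝ} (hr : 1 ≤ r) (hb : 0 ≤ b)
    (hv : AEStronglyMeasurable v (volume.restrict (Ioo 0 b))) :
    eLpNorm (landes h v_o v) (ENNReal.ofReal r) (volume.restrict (Ioo 0 b)) ≤
      eLpNorm v (ENNReal.ofReal r) (volume.restrict (Ioo 0 b)) +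
        ENNReal.ofReal ((h / r * (1 - Real.exp (-(b * r) / h))) ^ (1 / r)) * ‖v_o‖ₑ := by
  set μ := volume.restrict (Ioo (0:ℝ) b)
  have hr0 : 0 < r := one_pos.trans_le hr
  simp only [eLpNorm_eq_eLpNorm' (ENNReal.ofReal_ne_zero_iff.2 hr0) ENNReal.ofReal_ne_top,
    ENNReal.toReal_ofReal hr0.le]
  set B : ℝ → ℝ≥0∞ := fun t => ∫⁻ s in Ioo 0 b, expKernel h (t - s) * ‖v s‖ₑ
  have hB : AEMeasurable B μ :=
    AEMeasurable.lintegral_prod_right' (f := fun p : ℝ × ℝ => expKernel h (p.1 - p.2) * ‖v p.2‖ₑ)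
      (((measurable_expKernel h).comp measurable_sub).aemeasurable.mul hv.enorm.comp_snd)
  have hpt : ∀ᵐ t ∂μ, ‖landes h v_o v t‖ₑ ≤ ‖‖Real.exp (-t / h) • v_o‖ₑ + B t‖ₑ :=
    ae_restrict_of_forall_mem measurableSet_Ioo fun t ht =>
      (enorm_landes_le hh ht.1.le).trans (add_le_add le_rfl (lintegral_mono_set
        (Ioc_subset_Ioo_right ht.2)))
  have hBv : eLpNorm' B r μ ≤ eLpNorm' v r μ := by
    simp only [eLpNorm'_eq_lintegral_enorm, enorm_eq_self]
    exact ENNReal.rpow_le_rpow (lintegral_rpow_setLIntegral_sub_mul_le (measurable_expKernel h)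
      (lintegral_expKernel hh).le _ hv.enorm hr) (by positivity)
  calc eLpNorm' (landes h v_o v) r μ
      ≤ eLpNorm' (fun t => ‖Real.exp (-t / h) • v_o‖ₑ + B t) r μ :=
        eLpNorm'_mono_enorm_ae hr0.le hpt
    _ ≤ eLpNorm' (fun t => ‖Real.exp (-t / h) • v_o‖ₑ) r μ + eLpNorm' B r μ :=
        eLpNorm'_add_le (Continuous.aestronglyMeasurable (by fun_prop)) hB.aestronglyMeasurable hr
    _ ≤ _ := by
        rw [eLpNorm'_enorm, eLpNorm'_exp_smul hh hr0 hb, add_comm]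
        exact add_le_add hBv le_rfl

theorem memLp_landes (hh : 0 < h) {r b : ℝ} (hr : 1 ≤ r) (hb : 0 ≤ b)
    (hv : MemLp v (ENNReal.ofReal r) (volume.restrict (Ioo 0 b))) :
    MemLp (landes h v_o v) (ENNReal.ofReal r) (volume.restrict (Ioo 0 b)) := by
  have hvI : IntegrableOn v (uIcc 0 b) := by
    rw [uIcc_of_le hb, integrableOn_Icc_iff_integrableOn_Ioo]
    exact hv.integrable (ENNReal.one_le_ofReal.2 hr)
  refine ⟨(continuousOn_landes hvI).aestronglyMeasurable measurableSet_uIcc |>.mono_set ?_, ?_⟩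
  · exact Ioo_subset_Icc_self.trans (uIcc_of_le hb).symm.subset
  · exact (eLpNorm_landes_le hh hr hb hv.1).trans_lt
      (ENNReal.add_lt_top.2 ⟨hv.2, ENNReal.mul_lt_top ENNReal.ofReal_lt_top enorm_lt_top⟩)

theorem integral_norm_rpow_landes_le (hh : 0 < h) {r b : ℝ} (hr : 1 ≤ r) (hb : 0 ≤ b)
    (hv : MemLp v (ENNReal.ofReal r) (volume.restrict (Ioo 0 b))) :
    (∫ t in Ioo 0 b, ‖landes h v_o v t‖ ^ r) ^ (1 / r) ≤
      (∫ t in Ioo 0 b, ‖v t‖ ^ r) ^ (1 / r) +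
        (h / r * (1 - Real.exp (-(b * r) / h))) ^ (1 / r) * ‖v_o‖ := by
  have hr0 : 0 < r := one_pos.trans_le hr
  have hconst_ne_top :
      ENNReal.ofReal ((h / r * (1 - Real.exp (-(b * r) / h))) ^ (1 / r)) * ‖v_o‖ₑ ≠ ⊤ :=
    ENNReal.mul_ne_top ENNReal.ofReal_ne_top enorm_ne_top
  rw [(memLp_landes hh hr hb hv).rpow_integral_norm_rpow_eq_toReal_eLpNorm hr0,
    hv.rpow_integral_norm_rpow_eq_toReal_eLpNorm hr0]
  have := ENNReal.toReal_mono (ENNReal.add_ne_top.2 ⟨hv.eLpNorm_ne_top, hconst_ne_top⟩)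
    (eLpNorm_landes_le hh hr hb hv.1)
  rwa [ENNReal.toReal_add hv.eLpNorm_ne_top hconst_ne_top, ENNReal.toReal_mul,
    ENNReal.toReal_ofReal (Real.rpow_nonneg (div_mul_one_sub_exp_nonneg hh hr0 hb) _),
    toReal_enorm] at this

end Landes

theorem stmt7_general {X : Type*} [NormedAddCommGroup X] [NormedSpace ℝ X]
    (T r : ℝ) (hT : 0 < T) (hr : 1 ≤ r) (v_o : X) (v : ℝ → X)
    (hv : MemLp v (ENNReal.ofReal r) (volume.restrict (Set.Ioo 0 T)))
    (h : ℝ) (hh : 0 < h) :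
    MemLp (landes h v_o v) (ENNReal.ofReal r) (volume.restrict (Set.Ioo 0 T)) ∧
    ∀ t_o ∈ Set.Ioc (0:ℝ) T,
      (∫ t in Set.Ioo (0:ℝ) t_o, ‖landes h v_o v t‖ ^ r) ^ (1 / r) ≤
        (∫ t in Set.Ioo (0:ℝ) t_o, ‖v t‖ ^ r) ^ (1 / r) +
          ((h / r) * (1 - Real.exp (-(t_o * r) / h))) ^ (1 / r) * ‖v_o‖ :=
  ⟨memLp_landes hh hr hT.le hv, fun _ ht => integral_norm_rpow_landes_le hh hr ht.1.le
    (hv.mono_measure (Measure.restrict_mono (Ioo_subset_Ioo_right ht.2) le_rfl))⟩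

/-- If `v ∈ L^r(0,T;X)` with `1 ≤ r < ∞` and `v_o ∈ X`, then for every `h > 0` the Landes
mollification `[v]_h` belongs to `L^r(0,T;X)`, and for every `t_o ∈ (0,T]`:
`‖[v]_h‖_{L^r(0,t_o;X)} ≤ ‖v‖_{L^r(0,t_o;X)} + [(h/r)(1 − e^{−t_o r/h})]^{1/r}·‖v_o‖`. -/
theorem stmt7 {X : Type*} [NormedAddCommGroup X] [NormedSpace ℝ X] [CompleteSpace X]
    (T r : ℝ) (hT : 0 < T) (hr : 1 ≤ r) (v_o : X) (v : ℝ → X)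
    (hv : MemLp v (ENNReal.ofReal r) (volume.restrict (Set.Ioo 0 T)))
    (h : ℝ) (hh : 0 < h) :
    MemLp (landes h v_o v) (ENNReal.ofReal r) (volume.restrict (Set.Ioo 0 T)) ∧
    ∀ t_o ∈ Set.Ioc (0:ℝ) T,
      (∫ t in Set.Ioo (0:ℝ) t_o, ‖landes h v_o v t‖ ^ r) ^ (1 / r) ≤
        (∫ t in Set.Ioo (0:ℝ) t_o, ‖v t‖ ^ r) ^ (1 / r) +
          ((h / r) * (1 - Real.exp (-(t_o * r) / h))) ^ (1 / r) * ‖v_o‖ :=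
  stmt7_general T r hT hr v_o v hv h hh
end

section
/- Let X be a real Banach space, 0 < T < ∞, 1 ≤ r < ∞, v_o ∈ X, and v ∈ L^r(0,T;X). Then [v]_h → v strongly in L^r(0,T;X) in the limit h ↓ 0, i.e. ∫_0^T ‖[v]_h(t) − v(t)‖_X^r dt → 0 as h ↓ 0. -/
/-!
For `h > 0` and `0 ≤ t`, `[v]_h(t) - e^{-t/h} v_o = ∫_{(0,t]} ρ_h(t - s) v(s) ds`, where `ρ_h`
is the density of the exponential distribution of rate `1/h`. Since `ρ_h` has mass one, Jensen's
inequality and Tonelli (Schur's test) show that `v ↦ [v]_h - e^{-t/h} v_o` is a contraction of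
`L^r(0,T;X)`. For a bounded continuous `g`, `ρ_h(t - ·)` concentrates at `t` as `h ↓ 0`, so
`[g]_h → g` pointwise on `(0,T)` and, by dominated convergence, in `L^r`. The general case follows
by approximating `v` in `L^r` by bounded continuous functions.
-/

open MeasureTheory

open Set Filter ProbabilityTheory
open scoped ENNReal Topology BoundedContinuousFunction

lemma rpow_lintegral_mul_le_lintegral_mul_rpow {α : Type*} [MeasurableSpace α] {ν : Measure α}
    {w F : α → ℝ≥0∞} {r : ℝ} (hw : AEMeasurable w ν) (hF : AEMeasurable F ν)
    (hw_le : ∫⁻ s, w s ∂ν ≤ 1) (hr : 1 ≤ r) :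
    (∫⁻ s, w s * F s ∂ν) ^ r ≤ ∫⁻ s, w s * F s ^ r ∂ν := by
  have hr0 : 0 < r := zero_lt_one.trans_le hr
  have hF' : AEMeasurable F (ν.withDensity w) :=
    hF.mono_ac (withDensity_absolutelyContinuous _ _)
  have holder :=
    eLpNorm'_le_eLpNorm'_mul_rpow_measure_univ zero_lt_one hr hF'.aestronglyMeasurable
  have hmass : ν.withDensity w univ ^ (1 / 1 - 1 / r) ≤ 1 :=
    ENNReal.rpow_le_one (by simpa using hw_le)
      (by rw [div_one, sub_nonneg]; exact div_le_one_of_le₀ hr hr0.le)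
  have key : ∫⁻ s, F s ∂ν.withDensity w ≤ (∫⁻ s, F s ^ r ∂ν.withDensity w) ^ (1 / r) := by
    simpa [eLpNorm', enorm_eq_self] using holder.trans (mul_le_of_le_one_right' hmass)
  rw [lintegral_withDensity_eq_lintegral_mul₀ hw hF,
    lintegral_withDensity_eq_lintegral_mul₀ hw (hF.pow_const r)] at key
  calc (∫⁻ s, w s * F s ∂ν) ^ r ≤ ((∫⁻ s, w s * F s ^ r ∂ν) ^ (1 / r)) ^ r := by gcongr; exact key
    _ = ∫⁻ s, w s * F s ^ r ∂ν := by
        rw [← ENNReal.rpow_mul, one_div_mul_cancel hr0.ne', ENNReal.rpow_one]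

lemma lintegral_rpow_lintegral_kernel_mul_le {α β : Type*} [MeasurableSpace α]
    [MeasurableSpace β] {μ : Measure α} {ν : Measure β} [SFinite μ] [SFinite ν]
    {k : α → β → ℝ≥0∞} {F : β → ℝ≥0∞} {r : ℝ} (hk : Measurable (Function.uncurry k))
    (hF : AEMeasurable F ν) (hk_row : ∀ t, ∫⁻ s, k t s ∂ν ≤ 1)
    (hk_col : ∀ s, ∫⁻ t, k t s ∂μ ≤ 1) (hr : 1 ≤ r) :
    ∫⁻ t, (∫⁻ s, k t s * F s ∂ν) ^ r ∂μ ≤ ∫⁻ s, F s ^ r ∂ν :=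
  calc ∫⁻ t, (∫⁻ s, k t s * F s ∂ν) ^ r ∂μ
      ≤ ∫⁻ t, ∫⁻ s, k t s * F s ^ r ∂ν ∂μ := lintegral_mono fun t =>
        rpow_lintegral_mul_le_lintegral_mul_rpow (hk.comp measurable_prodMk_left).aemeasurable
          hF (hk_row t) hr
    _ = ∫⁻ s, ∫⁻ t, k t s * F s ^ r ∂μ ∂ν :=
        lintegral_lintegral_swap (hk.aemeasurable.mul (hF.pow_const r).comp_snd)
    _ = ∫⁻ s, (∫⁻ t, k t s ∂μ) * F s ^ r ∂ν := by
        congr with s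
        exact lintegral_mul_const _ (hk.comp measurable_prodMk_right)
    _ ≤ ∫⁻ s, F s ^ r ∂ν := lintegral_mono fun s => mul_le_of_le_one_left' (hk_col s)

lemma integrableOn_uIcc_of_memLp {X : Type*} [NormedAddCommGroup X] {T : ℝ} (hT : 0 ≤ T)
    {p : ℝ≥0∞} (hp : 1 ≤ p) {v : ℝ → X} (hv : MemLp v p (volume.restrict (Ioo 0 T))) :
    IntegrableOn v (uIcc 0 T) := by
  rw [uIcc_of_le hT, integrableOn_Icc_iff_integrableOn_Ioo]
  exact hv.integrable hp

lemma integral_norm_rpow_eq_toReal_eLpNorm_rpow {α E : Type*} [MeasurableSpace α]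
    [NormedAddCommGroup E] {μ : Measure α} {r : ℝ} (hr : 0 < r) {f : α → E}
    (hf : AEStronglyMeasurable f μ) :
    ∫ x, ‖f x‖ ^ r ∂μ = (eLpNorm f (ENNReal.ofReal r) μ).toReal ^ r := by
  rw [toReal_eLpNorm hf, lpNorm_eq_integral_norm_rpow_toReal (by simpa using hr)
    ENNReal.ofReal_ne_top hf, ENNReal.toReal_ofReal hr.le, ← Real.rpow_mul
    (integral_nonneg fun _ => by positivity), inv_mul_cancel₀ hr.ne', Real.rpow_one]

lemma measurable_exponentialPDF (r : ℝ) : Measurable (exponentialPDF r) :=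
  (measurable_exponentialPDFReal r).ennreal_ofReal

lemma exponentialPDFReal_of_nonneg {r x : ℝ} (hx : 0 ≤ x) :
    exponentialPDFReal r x = r * Real.exp (-(r * x)) := by
  simp [exponentialPDFReal, gammaPDFReal, if_pos hx]

lemma exponentialPDFReal_inv_sub {h s t : ℝ} (hst : s ≤ t) :
    exponentialPDFReal h⁻¹ (t - s) = Real.exp ((s - t) / h) / h := by
  rw [exponentialPDFReal_of_nonneg (sub_nonneg.2 hst), div_eq_inv_mul]
  congr 2
  ring

lemma lintegral_exponentialPDF_sub_left_le_one {h : ℝ} (hh : 0 < h) (t : ℝ) (A : Set ℝ) :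
    ∫⁻ s in A, exponentialPDF h⁻¹ (t - s) ≤ 1 :=
  (setLIntegral_le_lintegral _ _).trans_eq <|
    (lintegral_sub_left_eq_self (exponentialPDF h⁻¹) t).trans
      (lintegral_exponentialPDF_eq_one (inv_pos.2 hh))

lemma lintegral_exponentialPDF_sub_right_le_one {h : ℝ} (hh : 0 < h) (s : ℝ) (A : Set ℝ) :
    ∫⁻ t in A, exponentialPDF h⁻¹ (t - s) ≤ 1 :=
  (setLIntegral_le_lintegral _ _).trans_eq <|
    (lintegral_sub_right_eq_self (exponentialPDF h⁻¹) s).trans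
      (lintegral_exponentialPDF_eq_one (inv_pos.2 hh))

lemma tendsto_exp_neg_div_nhdsGT_zero {t : ℝ} (ht : 0 < t) :
    Tendsto (fun h => Real.exp (-t / h)) (𝓝[>] 0) (𝓝 0) := by
  have : Tendsto (fun h : ℝ => -t / h) (𝓝[>] 0) atBot := by
    simpa [div_eq_mul_inv] using
      tendsto_inv_nhdsGT_zero.const_mul_atTop_of_neg (neg_neg_of_pos ht)
  exact Real.tendsto_exp_atBot.comp this

lemma tendsto_inv_mul_exp_neg_inv_mul_nhdsGT_zero {δ : ℝ} (hδ : 0 < δ) :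
    Tendsto (fun h => h⁻¹ * Real.exp (-(h⁻¹ * δ))) (𝓝[>] 0) (𝓝 0) := by
  have := (tendsto_rpow_mul_exp_neg_mul_atTop_nhds_zero 1 δ hδ).comp tendsto_inv_nhdsGT_zero
  refine this.congr fun h => ?_
  simp [mul_comm]

lemma setIntegral_exponentialPDFReal_sub {r t : ℝ} (ht : 0 ≤ t) :
    ∫ s in Ioc 0 t, exponentialPDFReal r (t - s) = 1 - Real.exp (-(r * t)) := by
  rw [← intervalIntegral.integral_of_le ht, intervalIntegral.integral_comp_sub_left, sub_self,
    sub_zero]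
  have hpdf : EqOn (exponentialPDFReal r) (fun u => r * Real.exp (-(r * u))) (uIcc 0 t) :=
    fun u hu => exponentialPDFReal_of_nonneg (uIcc_of_le ht ▸ hu).1
  have hcont : Continuous fun u => r * Real.exp (-(r * u)) := by fun_prop
  rw [intervalIntegral.integral_congr hpdf, intervalIntegral.integral_eq_sub_of_hasDerivAt
    (fun _ _ => hasDerivAt_neg_exp_mul_exp) (hcont.intervalIntegrable _ _)]
  simp
  ring

lemma exponentialPDFReal_le {r x δ : ℝ} (hr : 0 ≤ r) (hδ : 0 ≤ δ) (hx : δ ≤ x) :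
    exponentialPDFReal r x ≤ r * Real.exp (-(r * δ)) := by
  rw [exponentialPDFReal_of_nonneg (hδ.trans hx)]
  gcongr

lemma tendstoUniformlyOn_exponentialPDFReal_inv_sub {δ : ℝ} (hδ : 0 < δ) (t : ℝ) :
    TendstoUniformlyOn (fun h s => exponentialPDFReal h⁻¹ (t - s)) 0 (𝓝[>] 0)
      {s | δ ≤ t - s} := by
  rw [Metric.tendstoUniformlyOn_iff]
  intro ε hε
  filter_upwards [self_mem_nhdsWithin,
    (tendsto_inv_mul_exp_neg_inv_mul_nhdsGT_zero hδ).eventually (gt_mem_nhds hε)]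
    with h (hh : 0 < h) hsmall s (hs : δ ≤ t - s)
  rw [Pi.zero_apply, dist_zero_left,
    Real.norm_of_nonneg (exponentialPDFReal_nonneg (inv_pos.2 hh) _)]
  exact (exponentialPDFReal_le (inv_pos.2 hh).le hδ.le hs).trans_lt hsmall

section Landes

variable {X : Type*} [NormedAddCommGroup X] [NormedSpace ℝ X]

noncomputable def landesIntegral (h : ℝ) (f : ℝ → X) (t : ℝ) : X :=
  (1 / h) • ∫ s in (0:ℝ)..t, Real.exp ((s - t) / h) • f s

lemma landes_eq_add (h : ℝ) (v_o : X) (f : ℝ → X) (t : ℝ) :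
    landes h v_o f t = Real.exp (-t / h) • v_o + landesIntegral h f t := rfl

lemma landesIntegral_eq_setIntegral {h t : ℝ} (ht : 0 ≤ t) (f : ℝ → X) :
    landesIntegral h f t = ∫ s in Ioc 0 t, exponentialPDFReal h⁻¹ (t - s) • f s := by
  rw [landesIntegral, intervalIntegral.integral_of_le ht, ← integral_smul]
  refine setIntegral_congr_fun measurableSet_Ioc fun s hs => ?_
  rw [smul_smul, exponentialPDFReal_inv_sub hs.2, one_div_mul_eq_div]

lemma enorm_landesIntegral_le {h t : ℝ} (hh : 0 < h) (ht : 0 ≤ t) (f : ℝ → X) :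
    ‖landesIntegral h f t‖ₑ ≤ ∫⁻ s in Ioc 0 t, exponentialPDF h⁻¹ (t - s) * ‖f s‖ₑ := by
  rw [landesIntegral_eq_setIntegral ht]
  refine (enorm_integral_le_lintegral_enorm _).trans_eq (lintegral_congr fun s => ?_)
  rw [enorm_smul, Real.enorm_of_nonneg (exponentialPDFReal_nonneg (inv_pos.2 hh) _)]
  rfl

lemma enorm_landesIntegral_le_of_forall_le {h t : ℝ} (hh : 0 < h) (ht : 0 ≤ t) {f : ℝ → X}
    {C : ℝ≥0∞} (hC : ∀ s, ‖f s‖ₑ ≤ C) : ‖landesIntegral h f t‖ₑ ≤ C :=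
  calc ‖landesIntegral h f t‖ₑ ≤ ∫⁻ s in Ioc 0 t, exponentialPDF h⁻¹ (t - s) * C :=
        (enorm_landesIntegral_le hh ht f).trans (lintegral_mono fun s => by gcongr; exact hC s)
    _ = (∫⁻ s in Ioc 0 t, exponentialPDF h⁻¹ (t - s)) * C :=
        lintegral_mul_const _
          ((measurable_exponentialPDF _).comp (measurable_const.sub measurable_id))
    _ ≤ C := mul_le_of_le_one_left' (lintegral_exponentialPDF_sub_left_le_one hh t _)

lemma enorm_landes_le_s8 {h t : ℝ} (hh : 0 < h) (ht : 0 ≤ t) (v_o : X) {f : ℝ → X}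
    {C : ℝ≥0∞} (hC : ∀ s, ‖f s‖ₑ ≤ C) : ‖landes h v_o f t‖ₑ ≤ ‖v_o‖ₑ + C := by
  have hexp : ‖Real.exp (-t / h)‖ₑ ≤ 1 := by
    rw [Real.enorm_of_nonneg (Real.exp_pos _).le, ENNReal.ofReal_le_one, Real.exp_le_one_iff]
    exact div_nonpos_of_nonpos_of_nonneg (neg_nonpos.2 ht) hh.le
  rw [landes_eq_add]
  refine enorm_add_le _ _ |>.trans (add_le_add ?_ (enorm_landesIntegral_le_of_forall_le hh ht hC))
  exact (enorm_smul _ _).trans_le (mul_le_of_le_one_left' hexp)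

lemma lintegral_enorm_landesIntegral_rpow_le {h T r : ℝ} (hh : 0 < h) (hr : 1 ≤ r) {f : ℝ → X}
    (hf : AEStronglyMeasurable f (volume.restrict (Ioo 0 T))) :
    ∫⁻ t in Ioo 0 T, ‖landesIntegral h f t‖ₑ ^ r ≤ ∫⁻ t in Ioo 0 T, ‖f t‖ₑ ^ r :=
  calc ∫⁻ t in Ioo 0 T, ‖landesIntegral h f t‖ₑ ^ r
      ≤ ∫⁻ t in Ioo 0 T, (∫⁻ s in Ioo 0 T, exponentialPDF h⁻¹ (t - s) * ‖f s‖ₑ) ^ r :=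
        setLIntegral_mono' measurableSet_Ioo fun t ht => by
          gcongr
          exact (enorm_landesIntegral_le hh ht.1.le f).trans
            (lintegral_mono_set fun s hs => ⟨hs.1, hs.2.trans_lt ht.2⟩)
    _ ≤ ∫⁻ t in Ioo 0 T, ‖f t‖ₑ ^ r :=
        lintegral_rpow_lintegral_kernel_mul_le
          ((measurable_exponentialPDF _).comp (measurable_fst.sub measurable_snd)) hf.enorm
          (fun t => lintegral_exponentialPDF_sub_left_le_one hh t _)
          (fun s => lintegral_exponentialPDF_sub_right_le_one hh s _) hr

lemma eLpNorm_landesIntegral_le {h T : ℝ} (hh : 0 < h) {p : ℝ≥0∞} (hp : 1 ≤ p) (hp_top : p ≠ ∞)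
    {f : ℝ → X} (hf : AEStronglyMeasurable f (volume.restrict (Ioo 0 T))) :
    eLpNorm (landesIntegral h f) p (volume.restrict (Ioo 0 T))
      ≤ eLpNorm f p (volume.restrict (Ioo 0 T)) := by
  have hp0 : p ≠ 0 := (zero_lt_one.trans_le hp).ne'
  rw [eLpNorm_eq_lintegral_rpow_enorm_toReal hp0 hp_top,
    eLpNorm_eq_lintegral_rpow_enorm_toReal hp0 hp_top]
  exact ENNReal.rpow_le_rpow (lintegral_enorm_landesIntegral_rpow_le hh
    (by simpa using ENNReal.toReal_mono hp_top hp) hf) (by positivity)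

lemma continuousOn_landesIntegral (h b : ℝ) {f : ℝ → X} (hf : IntegrableOn f (uIcc 0 b)) :
    ContinuousOn (landesIntegral h f) (uIcc 0 b) := by
  have hfactor : landesIntegral h f =
      fun t => (1 / h) • Real.exp (-t / h) • ∫ s in (0:ℝ)..t, Real.exp (s / h) • f s := by
    ext t
    simp only [landesIntegral, ← intervalIntegral.integral_smul, smul_smul, ← Real.exp_add]
    congr with s
    ring_nf
  have hprim := intervalIntegral.continuousOn_primitive_interval
    (hf.continuousOn_smul (by fun_prop : Continuous fun s => Real.exp (s / h)).continuousOn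
      isCompact_uIcc)
  rw [hfactor]
  exact continuousOn_const.smul
    ((by fun_prop : Continuous fun t => Real.exp (-t / h)).continuousOn.smul hprim)

lemma aestronglyMeasurable_landesIntegral (h : ℝ) {T : ℝ} {f : ℝ → X}
    (hf : IntegrableOn f (uIcc 0 T)) :
    AEStronglyMeasurable (landesIntegral h f) (volume.restrict (Ioo 0 T)) :=
  ((continuousOn_landesIntegral h T hf).mono
    (Ioo_subset_Icc_self.trans Icc_subset_uIcc)).aestronglyMeasurable measurableSet_Ioo

lemma aestronglyMeasurable_landes (h : ℝ) (v_o : X) {T : ℝ} {f : ℝ → X}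
    (hf : IntegrableOn f (uIcc 0 T)) :
    AEStronglyMeasurable (landes h v_o f) (volume.restrict (Ioo 0 T)) :=
  (by fun_prop : Continuous fun t => Real.exp (-t / h) • v_o).aestronglyMeasurable.add
    (aestronglyMeasurable_landesIntegral h hf)

lemma landesIntegral_sub {h t : ℝ} {f g : ℝ → X} (hf : IntegrableOn f (uIcc 0 t))
    (hg : IntegrableOn g (uIcc 0 t)) :
    landesIntegral h (f - g) t = landesIntegral h f t - landesIntegral h g t := by
  have hexp : ContinuousOn (fun s => Real.exp ((s - t) / h)) (uIcc 0 t) := by fun_prop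
  simp only [landesIntegral, Pi.sub_apply, smul_sub]
  rw [intervalIntegral.integral_sub
    (hf.continuousOn_smul hexp isCompact_uIcc).intervalIntegrable
    (hg.continuousOn_smul hexp isCompact_uIcc).intervalIntegrable, smul_sub]

lemma landes_sub_ae_eq (h : ℝ) (v_o : X) {T : ℝ} {f g : ℝ → X} (hf : IntegrableOn f (uIcc 0 T))
    (hg : IntegrableOn g (uIcc 0 T)) :
    landes h v_o f - f
      =ᵐ[volume.restrict (Ioo 0 T)] landesIntegral h (f - g) + (landes h v_o g - g) + (g - f) := by
  filter_upwards [ae_restrict_mem measurableSet_Ioo] with t ht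
  have hsub : uIcc 0 t ⊆ uIcc 0 T :=
    uIcc_subset_uIcc_left (Icc_subset_uIcc (Ioo_subset_Icc_self ht))
  simp only [Pi.add_apply, Pi.sub_apply, landes_eq_add,
    landesIntegral_sub (hf.mono_set hsub) (hg.mono_set hsub)]
  abel

end Landes

section Convergence

variable {X : Type*} [NormedAddCommGroup X] [NormedSpace ℝ X] [CompleteSpace X]

lemma tendsto_landesIntegral_nhdsGT_zero {t : ℝ} (ht : 0 < t) {g : ℝ → X}
    (hg : IntegrableOn g (Ioc 0 t)) (hgt : ContinuousWithinAt g (Ioc 0 t) t) :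
    Tendsto (fun h => landesIntegral h g t) (𝓝[>] 0) (𝓝 (g t)) := by
  simp_rw [landesIntegral_eq_setIntegral ht.le]
  refine tendsto_setIntegral_peak_smul_of_integrableOn_of_tendsto measurableSet_Ioc
    measurableSet_Ioc subset_rfl self_mem_nhdsWithin measure_Ioc_lt_top.ne ?_ ?_ ?_
    (.of_forall fun h => (((measurable_exponentialPDFReal _).comp
      (measurable_const.sub measurable_id)).aestronglyMeasurable)) hg hgt
  · filter_upwards [self_mem_nhdsWithin] with h (hh : 0 < h) s _
    exact exponentialPDFReal_nonneg (inv_pos.2 hh) _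
  · intro u hu htu
    obtain ⟨δ, hδ, hball⟩ := Metric.isOpen_iff.1 hu t htu
    refine (tendstoUniformlyOn_exponentialPDFReal_inv_sub hδ t).mono fun s hs =>
      show δ ≤ t - s from le_of_not_gt fun hlt => hs.2 (hball ?_)
    rw [Metric.mem_ball, Real.dist_eq, abs_sub_lt_iff]
    exact ⟨by linarith [hs.1.2], hlt⟩
  · simp_rw [setIntegral_exponentialPDFReal_sub ht.le]
    simpa [neg_div, div_eq_inv_mul] using (tendsto_exp_neg_div_nhdsGT_zero ht).const_sub 1

lemma tendsto_landes_nhdsGT_zero (v_o : X) {t : ℝ} (ht : 0 < t) {g : ℝ → X}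
    (hg : IntegrableOn g (Ioc 0 t)) (hgt : ContinuousWithinAt g (Ioc 0 t) t) :
    Tendsto (fun h => landes h v_o g t) (𝓝[>] 0) (𝓝 (g t)) := by
  have := ((tendsto_exp_neg_div_nhdsGT_zero ht).smul_const v_o).add
    (tendsto_landesIntegral_nhdsGT_zero ht hg hgt)
  rwa [zero_smul, zero_add] at this

lemma tendsto_eLpNorm_landes_sub_of_boundedContinuous {T : ℝ} {p : ℝ≥0∞} (hp : p ≠ 0)
    (hp_top : p ≠ ∞) (v_o : X) (g : ℝ →ᵇ X) :
    Tendsto (fun h => eLpNorm (landes h v_o g - ⇑g) p (volume.restrict (Ioo 0 T))) (𝓝[>] 0)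
      (𝓝 0) := by
  have hr : 0 < p.toReal := ENNReal.toReal_pos hp hp_top
  have hlim : Tendsto (fun h => ∫⁻ t in Ioo 0 T, ‖landes h v_o g t - g t‖ₑ ^ p.toReal) (𝓝[>] 0)
      (𝓝 0) := by
    have hC : ∀ s, ‖g s‖ₑ ≤ ‖g‖ₑ := fun s => enorm_le_iff_norm_le.2 (g.norm_coe_le_norm s)
    have hdom := tendsto_lintegral_filter_of_dominated_convergence'
      (μ := volume.restrict (Ioo 0 T)) (l := 𝓝[>] (0:ℝ)) (f := fun _ => 0)
      (F := fun h t => ‖landes h v_o g t - g t‖ₑ ^ p.toReal)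
      (fun _ => (‖v_o‖ₑ + ‖g‖ₑ + ‖g‖ₑ) ^ p.toReal) ?_ ?_ ?_ ?_
    · simpa using hdom
    · exact .of_forall fun h =>
        ((aestronglyMeasurable_landes h v_o g.continuous.integrableOn_uIcc).sub
          g.continuous.aestronglyMeasurable).enorm.pow_const _
    · filter_upwards [self_mem_nhdsWithin] with h (hh : 0 < h)
      filter_upwards [ae_restrict_mem measurableSet_Ioo] with t ht
      gcongr
      exact enorm_sub_le.trans (add_le_add (enorm_landes_le_s8 hh ht.1.le v_o hC) (hC t))
    · rw [lintegral_const]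
      exact ENNReal.mul_ne_top (ENNReal.rpow_ne_top_of_nonneg hr.le (by finiteness)) (by simp)
    · filter_upwards [ae_restrict_mem measurableSet_Ioo] with t ht
      have := ((tendsto_landes_nhdsGT_zero v_o ht.1 g.continuous.integrableOn_Ioc
        g.continuous.continuousWithinAt).sub_const (g t)).enorm
      simpa [Function.comp_def, ENNReal.zero_rpow_of_pos hr] using
        ((ENNReal.continuous_rpow_const (y := p.toReal)).tendsto _).comp this
  simp_rw [eLpNorm_eq_lintegral_rpow_enorm_toReal hp hp_top]
  simpa [Function.comp_def, ENNReal.zero_rpow_of_pos (inv_pos.2 hr)] using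
    ((ENNReal.continuous_rpow_const (y := p.toReal⁻¹)).tendsto 0).comp hlim

lemma tendsto_eLpNorm_landes_sub {T : ℝ} (hT : 0 ≤ T) {p : ℝ≥0∞} (hp : 1 ≤ p) (hp_top : p ≠ ∞)
    (v_o : X) {v : ℝ → X} (hv : MemLp v p (volume.restrict (Ioo 0 T))) :
    Tendsto (fun h => eLpNorm (landes h v_o v - v) p (volume.restrict (Ioo 0 T))) (𝓝[>] 0)
      (𝓝 0) := by
  set μ := volume.restrict (Ioo 0 T)
  have hv_int := integrableOn_uIcc_of_memLp hT hp hv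
  rw [ENNReal.tendsto_nhds_zero]
  intro ε hε
  have hε3 : 0 < ε / 3 := ENNReal.div_pos hε.ne' ENNReal.ofNat_ne_top
  obtain ⟨g, hvg, -⟩ := hv.exists_boundedContinuous_eLpNorm_sub_le hp_top hε3.ne'
  have hg_int : IntegrableOn g (uIcc 0 T) := g.continuous.integrableOn_uIcc
  filter_upwards [self_mem_nhdsWithin, (tendsto_eLpNorm_landes_sub_of_boundedContinuous (T := T)
    (zero_lt_one.trans_le hp).ne' hp_top v_o g).eventually (Iic_mem_nhds hε3)]
    with h (hh : 0 < h) hgh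
  calc eLpNorm (landes h v_o v - v) p μ
      = eLpNorm (landesIntegral h (v - ⇑g) + (landes h v_o g - ⇑g) + (⇑g - v)) p μ :=
        eLpNorm_congr_ae (landes_sub_ae_eq h v_o hv_int hg_int)
    _ ≤ eLpNorm (landesIntegral h (v - ⇑g)) p μ + eLpNorm (landes h v_o g - ⇑g) p μ
          + eLpNorm (⇑g - v) p μ := by
        have hK : AEStronglyMeasurable (landesIntegral h (v - ⇑g)) μ :=
          aestronglyMeasurable_landesIntegral h (hv_int.sub hg_int)
        have hG : AEStronglyMeasurable (landes h v_o g - ⇑g) μ :=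
          (aestronglyMeasurable_landes h v_o hg_int).sub g.continuous.aestronglyMeasurable
        exact (eLpNorm_add_le (hK.add hG) (g.continuous.aestronglyMeasurable.sub hv.1) hp).trans
          (add_le_add_left (eLpNorm_add_le hK hG hp) _)
    _ ≤ ε / 3 + ε / 3 + ε / 3 := by
        gcongr
        · exact (eLpNorm_landesIntegral_le hh hp hp_top
            (hv.1.sub g.continuous.aestronglyMeasurable)).trans hvg
        · rwa [eLpNorm_sub_comm]
    _ = ε := ENNReal.add_thirds ε

end Convergence

/-- If `v ∈ L^r(0,T;X)` with `1 ≤ r < ∞` and `v_o ∈ X`, then `[v]_h → v` strongly in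
`L^r(0,T;X)` as `h ↓ 0`, i.e. `∫_0^T ‖[v]_h(t) − v(t)‖^r dt → 0`. -/
theorem stmt8 {X : Type*} [NormedAddCommGroup X] [NormedSpace ℝ X] [CompleteSpace X]
    (T r : ℝ) (hT : 0 < T) (hr : 1 ≤ r) (v_o : X) (v : ℝ → X)
    (hv : MemLp v (ENNReal.ofReal r) (volume.restrict (Set.Ioo 0 T))) :
    Filter.Tendsto (fun h : ℝ => ∫ t in Set.Ioo (0:ℝ) T, ‖landes h v_o v t - v t‖ ^ r)
      (nhdsWithin 0 (Set.Ioi 0)) (nhds 0) := by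
  have hr0 : 0 < r := zero_lt_one.trans_le hr
  have hp : 1 ≤ ENNReal.ofReal r := by simpa using ENNReal.ofReal_le_ofReal hr
  have hv_int := integrableOn_uIcc_of_memLp hT.le hp hv
  have hL := tendsto_eLpNorm_landes_sub hT.le hp ENNReal.ofReal_ne_top v_o hv
  have hnorm : ∀ h, ∫ t in Ioo 0 T, ‖landes h v_o v t - v t‖ ^ r
      = (eLpNorm (landes h v_o v - v) (ENNReal.ofReal r) (volume.restrict (Ioo 0 T))).toReal ^ r :=
    fun h => integral_norm_rpow_eq_toReal_eLpNorm_rpow hr0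
      ((aestronglyMeasurable_landes h v_o hv_int).sub hv.1)
  simp_rw [hnorm]
  simpa [Real.zero_rpow hr0.ne'] using
    ((ENNReal.tendsto_toReal ENNReal.zero_ne_top).comp hL).rpow_const (Or.inr hr0.le)
end
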